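/- Let M be a strongly regular method of subdivision for k-simplices in ℝ^d. Then for every k-simplex σ and every n ≥ 1: Σ_{w∈M_n(σ)} diam(w)^k ≤ ‖M‖·diam(σ)^k, and for every γ > k, Σ_{w∈M_n(σ)} diam(w)^γ ≤ c_M^{n(γ-k)}·‖M‖·diam(σ)^γ. In particular, (M_n(σ))_{n≥1} is a regular sequence of subdivisions of σ. -/

import Mathlib

open MeasureTheory Metric Filter
open scoped ENNReal Topology

noncomputable section

abbrev Euc (d : ℕ) : Type := EuclideanSpace ℝ (Fin d)

namespace RoughForms

variable {d k : ℕ}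

/-- The (solid) simplex spanned by the tuple of vertices `v`. -/
def simplexSet (v : Fin (k+1) → Euc d) : Set (Euc d) := convexHull ℝ (Set.range v)

/-- The tuple obtained by omitting the `i`-th vertex. -/
def omitVertex {n : ℕ} (v : Fin (n+1) → Euc d) (i : Fin (n+1)) : Fin n → Euc d :=
  fun j => v (i.succAbove j)

/-- The boundary face of the simplex `v` opposite to the vertex `i`. -/
def faceSet (v : Fin (k+1) → Euc d) (i : Fin (k+1)) : Set (Euc d) :=
  convexHull ℝ (Set.range (omitVertex v i))

/-- The height over the boundary face opposite to vertex `i`: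
`sup_{x ∈ σ} dist(x, ⟨F⟩)`. -/
def hFace (v : Fin (k+1) → Euc d) (i : Fin (k+1)) : ℝ :=
  sSup ((fun x => Metric.infDist x
    ((affineSpan ℝ (Set.range (omitVertex v i)) : AffineSubspace ℝ (Euc d)) : Set (Euc d)))
      '' simplexSet v)

/-- `h_σ`: the minimal height over the boundary faces. -/
def hSimplex (v : Fin (k+1) → Euc d) : ℝ := ⨅ i : Fin (k+1), hFace v i

/-- `mass_α^k(σ) = max_F Vol^{k-1}(F) · h_σ^α`. -/
def mass (α : ℝ) (v : Fin (k+1) → Euc d) : ℝ :=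
  ⨆ i : Fin (k+1), (μH[((k : ℝ) - 1)] (faceSet v i)).toReal * hSimplex v ^ α

/-- diameter of the simplex spanned by `v`. -/
def sdiam (v : Fin (k+1) → Euc d) : ℝ := Metric.diam (simplexSet v)

/-- `w` is positively oriented relative to `v`: the matrix of barycentric
coordinates of the vertices of `w` with respect to the vertices of `v`
has positive determinant. -/
def PosOriented (v w : Fin (k+1) → Euc d) : Prop :=
  ∃ M : Matrix (Fin (k+1)) (Fin (k+1)) ℝ,
    (∀ i, ∑ j, M i j = 1) ∧
    (∀ i, w i = (Finset.univ.affineCombination ℝ v) (M i)) ∧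
    0 < M.det

/-- `S` is a subdivision of the simplex `v`, with all pieces ordered positively
relative to `v`. -/
def IsSubdivision (v : Fin (k+1) → Euc d) (S : Finset (Fin (k+1) → Euc d)) : Prop :=
  (∀ w ∈ S, AffineIndependent ℝ w ∧ PosOriented v w) ∧
  (⋃ w ∈ (S : Set (Fin (k+1) → Euc d)), simplexSet w) = simplexSet v ∧
  (∀ w ∈ S, ∀ w' ∈ S, w ≠ w' → μH[(k : ℝ)] (simplexSet w ∩ simplexSet w') = 0)

/-- A `k`-cochain: an alternating, additive (over subdivisions) function on ordered
tuples of affinely independent points. -/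
structure IsCochain (A : (Fin (k+1) → Euc d) → ℝ) : Prop where
  alt : ∀ v : Fin (k+1) → Euc d, AffineIndependent ℝ v → ∀ π : Equiv.Perm (Fin (k+1)),
    A (v ∘ π) = ((Equiv.Perm.sign π : ℤ) : ℝ) * A v
  add : ∀ v : Fin (k+1) → Euc d, AffineIndependent ℝ v →
    ∀ S : Finset (Fin (k+1) → Euc d), IsSubdivision v S → A v = ∑ w ∈ S, A w

/-- The boundary of a `k`-cochain, as a function on `(k+2)`-tuples. -/
def bdry (A : (Fin (k+1) → Euc d) → ℝ) : (Fin (k+2) → Euc d) → ℝ :=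
  fun w => ∑ i : Fin (k+2), (-1 : ℝ) ^ (i : ℕ) * A (omitVertex w i)

/-- An alternating function on tuples. -/
def Alternating (Ξ : (Fin (k+1) → Euc d) → ℝ) : Prop :=
  ∀ v : Fin (k+1) → Euc d, AffineIndependent ℝ v → ∀ π : Equiv.Perm (Fin (k+1)),
    Ξ (v ∘ π) = ((Equiv.Perm.sign π : ℤ) : ℝ) * Ξ v

/-- `⟦Ξ⟧_η ≤ N`. -/
def XiBound (η N : ℝ) (Ξ : (Fin (k+1) → Euc d) → ℝ) : Prop :=
  ∀ v : Fin (k+1) → Euc d, AffineIndependent ℝ v → |Ξ v| ≤ N * sdiam v ^ η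

/-- `⟦δΞ⟧_γ ≤ N`. -/
def DeltaBound (γ N : ℝ) (Ξ : (Fin (k+1) → Euc d) → ℝ) : Prop :=
  ∀ v : Fin (k+1) → Euc d, AffineIndependent ℝ v →
    ∀ S : Finset (Fin (k+1) → Euc d), IsSubdivision v S →
      |Ξ v - ∑ w ∈ S, Ξ w| ≤ N * S.card * sdiam v ^ γ

/-- A regular sequence of subdivisions of the simplex `v`. -/
def RegularSeq (v : Fin (k+1) → Euc d) (S : ℕ → Finset (Fin (k+1) → Euc d)) : Prop :=
  (∀ n, IsSubdivision v (S n)) ∧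
  ∀ β : ℝ, (k : ℝ) < β →
    Tendsto (fun n => ∑ w ∈ S n, sdiam w ^ β) atTop (nhds 0)


/-- `k`-volume of the simplex spanned by `v`. -/
def svol (v : Fin (k+1) → Euc d) : ℝ := (μH[(k : ℝ)] (simplexSet v)).toReal

/-- Eccentricity `𝔢(σ) = diam(σ)^k / Vol^k(σ)`. -/
def ecc (v : Fin (k+1) → Euc d) : ℝ := sdiam v ^ (k : ℝ) / svol v

/-- A method of subdivision for `k`-simplices in `ℝ^d`: for every `ℓ ≥ 1` and every
`k`-simplex `σ` it produces a subdivision `M_ℓ(σ)` (pieces positively oriented relative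
to `σ`), compatibly: `M_{ℓ+ℓ'}(σ) = ⋃_{w ∈ M_{ℓ'}(σ)} M_ℓ(w)`. -/
structure Method (d k : ℕ) where
  pieces : ℕ → (Fin (k+1) → Euc d) → Finset (Fin (k+1) → Euc d)
  subdiv : ∀ ℓ, 1 ≤ ℓ → ∀ v : Fin (k+1) → Euc d, AffineIndependent ℝ v →
    IsSubdivision v (pieces ℓ v)
  semigroup : ∀ ℓ ℓ', 1 ≤ ℓ → 1 ≤ ℓ' → ∀ v : Fin (k+1) → Euc d, AffineIndependent ℝ v →
    ∀ u, u ∈ pieces (ℓ + ℓ') v ↔ ∃ w ∈ pieces ℓ' v, u ∈ pieces ℓ w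

/-- The conditions expressing that the method `M` is strongly regular, with explicit
witnesses: `N` bounds the cardinality of `M_1(σ)`, `K` bounds the eccentricity ratios
(`‖M‖ ≤ K`), `c < 1` bounds the diameter contraction (`c_M ≤ c`), and `cv·ℓ^μ` bounds
the volume ratios between pieces of `M_ℓ(σ)`. -/
structure StronglyRegularWith (M : Method d k) (N : ℕ) (K c cv μ : ℝ) : Prop where
  card_bound : ∀ v : Fin (k+1) → Euc d, AffineIndependent ℝ v → (M.pieces 1 v).card ≤ N
  ecc_bound : ∀ v : Fin (k+1) → Euc d, AffineIndependent ℝ v → ∀ ℓ, 1 ≤ ℓ →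
    ∀ w ∈ M.pieces ℓ v, ecc w ≤ K * ecc v
  c_nonneg : 0 ≤ c
  c_lt_one : c < 1
  diam_bound : ∀ v : Fin (k+1) → Euc d, AffineIndependent ℝ v →
    ∀ w ∈ M.pieces 1 v, sdiam w ≤ c * sdiam v
  cv_pos : 0 < cv
  μ_pos : 0 < μ
  vol_bound : ∀ v : Fin (k+1) → Euc d, AffineIndependent ℝ v → ∀ ℓ, 1 ≤ ℓ →
    ∀ w ∈ M.pieces ℓ v, ∀ w' ∈ M.pieces ℓ v, svol w' ≤ cv * (ℓ : ℝ) ^ μ * svol w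

/-- The maximal diameter of the simplices in the finite family `S`. -/
def Dmax (S : Finset (Fin (k+1) → Euc d)) : ℝ :=
  sSup ((fun w => sdiam w) '' (S : Set (Fin (k+1) → Euc d)))

/-- The pieces of `Kn` whose simplex is contained in the simplex of `w`. -/
def containedIn (Kn : Finset (Fin (k+1) → Euc d)) (w : Fin (k+1) → Euc d) :
    Finset (Fin (k+1) → Euc d) :=
  @Finset.filter _ (fun u => simplexSet u ⊆ simplexSet w) (Classical.decPred _) Kn

/-! A strongly regular method subdivides `σ` into pieces of comparable eccentricity, so
`diam(w)^k = 𝔢(w)·Vol^k(w) ≤ ‖M‖·𝔢(σ)·Vol^k(w)`, and summing over the pieces, whose volumes add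
up to `Vol^k(σ)`, gives `Σ diam(w)^k ≤ ‖M‖·diam(σ)^k`. Since every piece of `M_n(σ)` has diameter
at most `c_M^n·diam(σ)`, writing `diam(w)^γ = diam(w)^(γ-k)·diam(w)^k` gains the factor
`(c_M^n·diam(σ))^(γ-k)`, which tends to `0` geometrically. -/

lemma sum_rpow_le_mul_sum_rpow {ι : Type*} (s : Finset ι) {f : ι → ℝ} {D a b : ℝ}
    (hf : ∀ i ∈ s, 0 ≤ f i) (hfD : ∀ i ∈ s, f i ≤ D) (ha : 0 ≤ a) (hab : a ≤ b) :
    ∑ i ∈ s, f i ^ b ≤ D ^ (b - a) * ∑ i ∈ s, f i ^ a := by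
  rw [Finset.mul_sum]
  refine Finset.sum_le_sum fun i hi => ?_
  calc f i ^ b = f i ^ (b - a) * f i ^ a := by
        rw [← Real.rpow_add_of_nonneg (hf i hi) (sub_nonneg.2 hab) ha, sub_add_cancel]
    _ ≤ D ^ (b - a) * f i ^ a :=
        mul_le_mul_of_nonneg_right (Real.rpow_le_rpow (hf i hi) (hfD i hi) (sub_nonneg.2 hab))
          (Real.rpow_nonneg (hf i hi) a)

lemma isCompact_simplexSet (v : Fin (k+1) → Euc d) : IsCompact (simplexSet v) :=
  (Set.finite_range v).isCompact_convexHull ℝ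

/- Translating by `-v 0` identifies the simplex isometrically with a full-dimensional simplex in
the `k`-dimensional space `vectorSpan ℝ (range v)`, where `μH[k]` is an additive Haar measure. -/
lemma hausdorffMeasure_simplexSet_pos_lt_top {v : Fin (k+1) → Euc d}
    (hv : AffineIndependent ℝ v) :
    0 < μH[(k : ℝ)] (simplexSet v) ∧ μH[(k : ℝ)] (simplexSet v) < ⊤ := by
  set V := vectorSpan ℝ (Set.range v)
  have hV : Module.finrank ℝ V = k := hv.finrank_vectorSpan (by simp)
  let f : V →ᵃ[ℝ] Euc d :=
    (AffineEquiv.vaddConst ℝ (v 0)).toAffineMap.comp V.subtype.toAffineMap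
  have hf : Isometry f := Isometry.of_dist_eq fun x y => by simp [f, Subtype.dist_eq]
  let p : Fin (k+1) → V := fun i =>
    ⟨v i -ᵥ v 0, vsub_mem_vectorSpan ℝ (Set.mem_range_self i) (Set.mem_range_self 0)⟩
  have hfp : f ∘ p = v := funext fun i => vsub_vadd (v i) (v 0)
  have hp : AffineIndependent ℝ p := AffineIndependent.of_comp f (hfp ▸ hv)
  have hspan : affineSpan ℝ (Set.range p) = ⊤ := by
    rw [hp.affineSpan_eq_top_iff_card_eq_finrank_add_one]
    simp [hV]
  have himage : simplexSet v = f '' convexHull ℝ (Set.range p) := by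
    rw [f.image_convexHull, ← Set.range_comp, hfp, simplexSet]
  have hμ : (μH[(k : ℝ)] : Measure V) = μH[(Module.finrank ℝ V : ℝ)] := by rw [hV]
  rw [himage, hf.hausdorffMeasure_image (Or.inl k.cast_nonneg), hμ]
  have hint := interior_convexHull_nonempty_iff_affineSpan_eq_top.2 hspan
  exact ⟨(isOpen_interior.measure_pos _ hint).trans_le (measure_mono interior_subset),
    ((Set.finite_range p).isCompact_convexHull ℝ).measure_lt_top⟩

lemma svol_pos {v : Fin (k+1) → Euc d} (hv : AffineIndependent ℝ v) : 0 < svol v :=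
  ENNReal.toReal_pos (hausdorffMeasure_simplexSet_pos_lt_top hv).1.ne'
    (hausdorffMeasure_simplexSet_pos_lt_top hv).2.ne

lemma IsSubdivision.svol_eq_sum {v : Fin (k+1) → Euc d} {S : Finset (Fin (k+1) → Euc d)}
    (hS : IsSubdivision v S) : svol v = ∑ w ∈ S, svol w := by
  have hμ : μH[(k : ℝ)] (simplexSet v) = ∑ w ∈ S, μH[(k : ℝ)] (simplexSet w) := by
    rw [← hS.2.1]
    exact measure_biUnion_finset₀ hS.2.2
      fun w _ => (isCompact_simplexSet w).isClosed.measurableSet.nullMeasurableSet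
  rw [svol, hμ, ENNReal.toReal_sum fun w hw =>
    (hausdorffMeasure_simplexSet_pos_lt_top (hS.1 w hw).1).2.ne]
  rfl

lemma IsSubdivision.sum_sdiam_rpow_le {v : Fin (k+1) → Euc d} {S : Finset (Fin (k+1) → Euc d)}
    (hv : AffineIndependent ℝ v) (hS : IsSubdivision v S) {K : ℝ}
    (hecc : ∀ w ∈ S, ecc w ≤ K * ecc v) :
    ∑ w ∈ S, sdiam w ^ (k : ℝ) ≤ K * sdiam v ^ (k : ℝ) := by
  have hvol : ∀ w ∈ S, 0 < svol w := fun w hw => svol_pos (hS.1 w hw).1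
  calc ∑ w ∈ S, sdiam w ^ (k : ℝ) = ∑ w ∈ S, ecc w * svol w :=
        Finset.sum_congr rfl fun w hw => (div_mul_cancel₀ _ (hvol w hw).ne').symm
    _ ≤ ∑ w ∈ S, K * ecc v * svol w :=
        Finset.sum_le_sum fun w hw => mul_le_mul_of_nonneg_right (hecc w hw) (hvol w hw).le
    _ = K * ecc v * svol v := by rw [← Finset.mul_sum, ← hS.svol_eq_sum]
    _ = K * sdiam v ^ (k : ℝ) := by rw [ecc, mul_assoc, div_mul_cancel₀ _ (svol_pos hv).ne']

lemma Method.sdiam_le_pow_mul (M : Method d k) {c : ℝ} (hc : 0 ≤ c)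
    (hdiam : ∀ v : Fin (k+1) → Euc d, AffineIndependent ℝ v →
      ∀ w ∈ M.pieces 1 v, sdiam w ≤ c * sdiam v)
    {v : Fin (k+1) → Euc d} (hv : AffineIndependent ℝ v) {n : ℕ} (hn : 1 ≤ n) :
    ∀ w ∈ M.pieces n v, sdiam w ≤ c ^ n * sdiam v := by
  induction n, hn using Nat.le_induction with
  | base => simpa using hdiam v hv
  | succ n hn ih =>
    intro w hw
    obtain ⟨u, hu, hwu⟩ := (M.semigroup 1 n le_rfl hn v hv w).1 (by rwa [add_comm 1 n])
    calc sdiam w ≤ c * sdiam u := hdiam u ((M.subdiv n hn v hv).1 u hu).1 w hwu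
      _ ≤ c * (c ^ n * sdiam v) := mul_le_mul_of_nonneg_left (ih u hu) hc
      _ = c ^ (n + 1) * sdiam v := by ring

namespace StronglyRegularWith

variable {M : Method d k} {N : ℕ} {K c cv μ : ℝ} {v : Fin (k+1) → Euc d}

lemma sum_sdiam_rpow_dim_le (hM : StronglyRegularWith M N K c cv μ)
    (hv : AffineIndependent ℝ v) {n : ℕ} (hn : 1 ≤ n) :
    ∑ w ∈ M.pieces n v, sdiam w ^ (k : ℝ) ≤ K * sdiam v ^ (k : ℝ) :=
  (M.subdiv n hn v hv).sum_sdiam_rpow_le hv (hM.ecc_bound v hv n hn)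

lemma sum_sdiam_rpow_le (hM : StronglyRegularWith M N K c cv μ)
    (hv : AffineIndependent ℝ v) {n : ℕ} (hn : 1 ≤ n) {γ : ℝ} (hγ : (k : ℝ) ≤ γ) :
    ∑ w ∈ M.pieces n v, sdiam w ^ γ ≤ c ^ ((n : ℝ) * (γ - k)) * K * sdiam v ^ γ := by
  have hc := hM.c_nonneg
  have hdv : 0 ≤ sdiam v := diam_nonneg
  calc ∑ w ∈ M.pieces n v, sdiam w ^ γ
      ≤ (c ^ n * sdiam v) ^ (γ - k) * ∑ w ∈ M.pieces n v, sdiam w ^ (k : ℝ) :=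
        sum_rpow_le_mul_sum_rpow _ (fun _ _ => diam_nonneg)
          (M.sdiam_le_pow_mul hc hM.diam_bound hv hn) k.cast_nonneg hγ
    _ ≤ (c ^ n * sdiam v) ^ (γ - k) * (K * sdiam v ^ (k : ℝ)) := by
        gcongr
        exact hM.sum_sdiam_rpow_dim_le hv hn
    _ = c ^ ((n : ℝ) * (γ - k)) * K * (sdiam v ^ (γ - k) * sdiam v ^ (k : ℝ)) := by
        rw [Real.mul_rpow (pow_nonneg hc n) hdv, ← Real.rpow_natCast c n, ← Real.rpow_mul hc]
        ring
    _ = c ^ ((n : ℝ) * (γ - k)) * K * sdiam v ^ γ := by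
        rw [← Real.rpow_add_of_nonneg hdv (sub_nonneg.2 hγ) k.cast_nonneg, sub_add_cancel]

lemma tendsto_sum_sdiam_rpow (hM : StronglyRegularWith M N K c cv μ)
    (hv : AffineIndependent ℝ v) {β : ℝ} (hβ : (k : ℝ) < β) :
    Tendsto (fun n => ∑ w ∈ M.pieces n v, sdiam w ^ β) atTop (𝓝 0) := by
  have hc := hM.c_nonneg
  have hr : c ^ (β - k) < 1 := Real.rpow_lt_one hc hM.c_lt_one (sub_pos.2 hβ)
  have hgeom : Tendsto (fun n : ℕ => (c ^ (β - k)) ^ n * (K * sdiam v ^ β)) atTop (𝓝 0) := by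
    simpa using (tendsto_pow_atTop_nhds_zero_of_lt_one (Real.rpow_nonneg hc _) hr).mul_const
      (K * sdiam v ^ β)
  refine squeeze_zero' (Eventually.of_forall fun _ =>
    Finset.sum_nonneg fun w _ => Real.rpow_nonneg diam_nonneg _) ?_ hgeom
  filter_upwards [eventually_ge_atTop 1] with n hn
  calc ∑ w ∈ M.pieces n v, sdiam w ^ β ≤ c ^ ((n : ℝ) * (β - k)) * K * sdiam v ^ β :=
        hM.sum_sdiam_rpow_le hv hn hβ.le
    _ = (c ^ (β - k)) ^ n * (K * sdiam v ^ β) := by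
        rw [mul_comm (n : ℝ), Real.rpow_mul hc, Real.rpow_natCast, mul_assoc]

end StronglyRegularWith

theorem stmt7_general (d k : ℕ)
    (M : Method d k) (N : ℕ) (K c cv μ : ℝ)
    (hM : StronglyRegularWith M N K c cv μ)
    (v : Fin (k+1) → Euc d) (hv : AffineIndependent ℝ v) :
    (∀ n : ℕ, 1 ≤ n →
        ∑ w ∈ M.pieces n v, sdiam w ^ (k : ℝ) ≤ K * sdiam v ^ (k : ℝ)) ∧
    (∀ n : ℕ, 1 ≤ n → ∀ γ : ℝ, (k : ℝ) < γ →
        ∑ w ∈ M.pieces n v, sdiam w ^ γ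
          ≤ c ^ ((n : ℝ) * (γ - (k : ℝ))) * K * sdiam v ^ γ) ∧
    (∀ β : ℝ, (k : ℝ) < β →
        Tendsto (fun n => ∑ w ∈ M.pieces n v, sdiam w ^ β) atTop (nhds 0)) :=
  ⟨fun _ hn => hM.sum_sdiam_rpow_dim_le hv hn,
    fun _ hn _ hγ => hM.sum_sdiam_rpow_le hv hn hγ.le,
    fun _ hβ => hM.tendsto_sum_sdiam_rpow hv hβ⟩

/-- for a strongly regular method of subdivision `M` (with witnesses
`‖M‖ ≤ K`, `c_M ≤ c < 1`), every `k`-simplex `σ` and every `n ≥ 1`: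
`Σ_{w∈M_n(σ)} diam(w)^k ≤ K·diam(σ)^k`; for every `γ > k`,
`Σ_{w∈M_n(σ)} diam(w)^γ ≤ c^{n(γ-k)}·K·diam(σ)^γ`; and `(M_n(σ))_n` is a regular
sequence of subdivisions of `σ`. -/
theorem stmt7 (d k : ℕ) (hk : 1 ≤ k) (hkd : k ≤ d)
    (M : Method d k) (N : ℕ) (K c cv μ : ℝ)
    (hM : StronglyRegularWith M N K c cv μ)
    (v : Fin (k+1) → Euc d) (hv : AffineIndependent ℝ v) :
    (∀ n : ℕ, 1 ≤ n →
        ∑ w ∈ M.pieces n v, sdiam w ^ (k : ℝ) ≤ K * sdiam v ^ (k : ℝ)) ∧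
    (∀ n : ℕ, 1 ≤ n → ∀ γ : ℝ, (k : ℝ) < γ →
        ∑ w ∈ M.pieces n v, sdiam w ^ γ
          ≤ c ^ ((n : ℝ) * (γ - (k : ℝ))) * K * sdiam v ^ γ) ∧
    (∀ β : ℝ, (k : ℝ) < β →
        Tendsto (fun n => ∑ w ∈ M.pieces n v, sdiam w ^ β) atTop (nhds 0)) :=
  stmt7_general d k M N K c cv μ hM v hv

end RoughForms
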